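/- arXiv:1105.1679 — 4 statements merged into one kernel-verified Lean document; each statement's English description precedes it below -/
import Mathlib

section
/- Let (g,T) be a toral pair satisfying (IA1), (IA2), and σ an automorphism of g satisfying (A1)–(A4). Suppose α, β ∈ R with α ≠ β and π(α) = π(β). Then for x ∈ g_α and y ∈ g_{-β}, one has π([x,y]) = 0, where π is the projection onto the fixed-point subalgebra g^0 of σ. -/
open Finset

section IARADefs

variable (F L : Type*) [Field F] [LieRing L] [LieAlgebra F L]

/-- The root space of a toral subalgebra `T` attached to a linear functional `α`
(viewed as a functional on `L`; only its values on `T` matter). -/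
def gSpace (T : LieSubalgebra F L) (α : L →ₗ[F] F) : Submodule F L where
  carrier := {x | ∀ t ∈ T, ⁅t, x⁆ = α t • x}
  add_mem' := by
    intro a b ha hb t ht
    rw [lie_add, ha t ht, hb t ht, smul_add]
  zero_mem' := by intro t ht; simp
  smul_mem' := by
    intro c x hx t ht
    rw [lie_smul, hx t ht, smul_comm]

/-- `(g, T)` is a toral pair with root system (a set of representatives) `R`. -/
structure IsToralPair (T : LieSubalgebra F L) (R : Set (L →ₗ[F] F)) : Prop where
  root_ne : ∀ α ∈ R, gSpace F L T α ≠ ⊥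
  decomp : (⨆ α ∈ R, gSpace F L T α) = ⊤
  complete : ∀ β : L →ₗ[F] F, gSpace F L T β ≠ ⊥ → ∃ α ∈ R, ∀ t ∈ T, α t = β t

/-- (IA1): `B` is an invariant nondegenerate symmetric bilinear form on `g`
whose restriction to `T` is nondegenerate. -/
structure IsInvForm (B : LinearMap.BilinForm F L) (T : LieSubalgebra F L) : Prop where
  symm : ∀ x y : L, B x y = B y x
  inv : ∀ x y z : L, B ⁅x, y⁆ z = B x ⁅y, z⁆
  nondeg : ∀ x : L, (∀ y : L, B x y = 0) → x = 0
  nondegT : ∀ t ∈ T, (∀ s ∈ T, B t s = 0) → t = 0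

/-- (IA2). -/
def IA2 (T : LieSubalgebra F L) (R : Set (L →ₗ[F] F)) : Prop :=
  ∀ α ∈ R, (∃ t ∈ T, α t ≠ 0) →
    ∃ e ∈ gSpace F L T α, ∃ f ∈ gSpace F L T (-α), ⁅e, f⁆ ≠ 0 ∧ ⁅e, f⁆ ∈ T

/-- (IA2)′ (division condition). -/
def IA2' (T : LieSubalgebra F L) (R : Set (L →ₗ[F] F)) : Prop :=
  ∀ α ∈ R, (∃ t ∈ T, α t ≠ 0) → ∀ e ∈ gSpace F L T α, e ≠ 0 →
    ∃ f ∈ gSpace F L T (-α), ⁅e, f⁆ ≠ 0 ∧ ⁅e, f⁆ ∈ T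

/-- (IA3): for nonisotropic roots `α` (i.e. `(α,α) = B t_α t_α ≠ 0` for a
representative `t_α ∈ T` of `α`), `ad x` is locally nilpotent for `x ∈ g_α`. -/
def IA3 (B : LinearMap.BilinForm F L) (T : LieSubalgebra F L)
    (R : Set (L →ₗ[F] F)) : Prop :=
  ∀ α ∈ R, ∀ tα ∈ T, (∀ t ∈ T, α t = B tα t) → B tα tα ≠ 0 →
    ∀ x ∈ gSpace F L T α, ∀ y : L, ∃ n : ℕ, ((LieAlgebra.ad F L x) ^ n) y = 0

/-- An invariant affine reflection algebra. -/
structure IsIARA (B : LinearMap.BilinForm F L) (T : LieSubalgebra F L)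
    (R : Set (L →ₗ[F] F)) : Prop where
  nonzero : ∃ x : L, x ≠ 0
  toral : IsToralPair F L T R
  ia1 : IsInvForm F L B T
  ia2 : IA2 F L T R
  ia3 : IA3 F L B T R

/-- A division invariant affine reflection algebra. -/
structure IsDivIARA (B : LinearMap.BilinForm F L) (T : LieSubalgebra F L)
    (R : Set (L →ₗ[F] F)) : Prop where
  nonzero : ∃ x : L, x ≠ 0
  toral : IsToralPair F L T R
  ia1 : IsInvForm F L B T
  ia2' : IA2' F L T R
  ia3 : IA3 F L B T R

variable {F L}

/-- (A4): the centralizer of `T⁰` in `g⁰` is contained in `g₀`. -/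
def A4Cond (T : LieSubalgebra F L) (σ : L ≃ₗ[F] L) : Prop :=
  ∀ x : L, σ x = x → (∀ t ∈ T, σ t = t → ⁅t, x⁆ = 0) → ∀ t ∈ T, ⁅t, x⁆ = 0

/-- The projection `π = (1/m) ∑ σ^i` of `g` onto the fixed points of `σ`. -/
noncomputable def piL (σ : L ≃ₗ[F] L) (m : ℕ) : L →ₗ[F] L :=
  (m : F)⁻¹ • ∑ i ∈ Finset.range m, ((σ ^ i : L ≃ₗ[F] L) : L →ₗ[F] L)

/-- The induced projection on functionals: `π(α) = (1/m) ∑ σ^i(α)`,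
`σ(α) = α ∘ σ⁻¹`. -/
noncomputable def piF (σ : L ≃ₗ[F] L) (m : ℕ) (α : L →ₗ[F] F) : L →ₗ[F] F :=
  (m : F)⁻¹ • ∑ i ∈ Finset.range m, α ∘ₗ ((σ⁻¹ ^ i : L ≃ₗ[F] L) : L →ₗ[F] L)

/-- The projection `π_j = (1/m) ∑ ζ^{-ji} σ^i` onto the `ζ^j`-eigenspace. -/
noncomputable def piJ (σ : L ≃ₗ[F] L) (m : ℕ) (ζ : F) (j : ℤ) : L →ₗ[F] L :=
  (m : F)⁻¹ • ∑ i ∈ Finset.range m,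
    ζ ^ (-(j * (i : ℤ))) • ((σ ^ i : L ≃ₗ[F] L) : L →ₗ[F] L)

/-- `x̄_j = ∑_{i=0}^{m/ℓ-1} ζ^{-jiℓ} σ^{iℓ}(x)`. -/
noncomputable def xbar (σ : L ≃ₗ[F] L) (m ℓ : ℕ) (ζ : F) (j : ℤ) (x : L) : L :=
  ∑ i ∈ Finset.range (m / ℓ), ζ ^ (-(j * (i : ℤ) * (ℓ : ℤ))) • ((σ ^ (i * ℓ)) x)

/-- Indecomposability of a set of roots with respect to a pairing `p`. -/
def Indecomposable {α : Type*} (p : α → α → F) (R : Set α) : Prop :=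
  ¬ ∃ R₁ R₂ : Set α, R₁.Nonempty ∧ R₂.Nonempty ∧ R₁ ∩ R₂ = ∅ ∧
      R₁ ∪ R₂ = {x ∈ R | p x x ≠ 0} ∧ ∀ x ∈ R₁, ∀ y ∈ R₂, p x y = 0

end IARADefs

/-!
The bracket `z = ⁅x, y⁆` is a weight vector of weight `α - β`, so each `σ^i z` is a weight vector
whose weight `(α - β) ∘ σ⁻ⁱ` is nonzero on `T`. Since `π(α) = π(β)`, every `σ^i z`, hence `π z`,
is centralized by `T⁰`; as `π z` is also `σ`-fixed, (A4) makes it centralized by all of `T`.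
A sum of weight vectors of nonzero weights that lies in the zero weight space vanishes.
-/

section

variable {F L : Type*} [Field F] [LieRing L] [LieAlgebra F L]

theorem sum_eq_zero_of_weights_ne_zero {M ι κ : Type*} [AddCommGroup M] [Module F M]
    (φ : κ → Module.End F M) (c : ι → κ → F) (u : ι → M) (s : Finset ι)
    (hu : ∀ i ∈ s, ∀ k, φ k (u i) = c i k • u i) (hc : ∀ i ∈ s, ∃ k, c i k ≠ 0)
    (hs : ∀ k, φ k (∑ i ∈ s, u i) = 0) : ∑ i ∈ s, u i = 0 := by
  classical
  induction s using Finset.induction_on generalizing u with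
  | empty => simp
  | insert a s ha ih =>
    obtain ⟨k, hk⟩ := hc a (mem_insert_self a s)
    -- subtracting `(c a k)⁻¹ • φ k` kills `u a` and rescales the other `u i`
    set u' : ι → M := fun i => (1 - (c a k)⁻¹ * c i k) • u i
    have hsum : ∑ i ∈ s, u' i = ∑ i ∈ insert a s, u i := by
      have hu'a : u' a = 0 := by simp only [u', inv_mul_cancel₀ hk, sub_self, zero_smul]
      calc ∑ i ∈ s, u' i = ∑ i ∈ insert a s, u' i := by rw [sum_insert ha, hu'a, zero_add]
        _ = ∑ i ∈ insert a s, u i - (c a k)⁻¹ • φ k (∑ i ∈ insert a s, u i) := by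
          simp only [u', map_sum, smul_sum, ← sum_sub_distrib]
          refine sum_congr rfl fun i hi => ?_
          rw [hu i hi, smul_smul, sub_smul, one_smul]
        _ = ∑ i ∈ insert a s, u i := by rw [hs, smul_zero, sub_zero]
    rw [← hsum]
    refine ih u' (fun i hi k' => ?_) (fun i hi => hc i (mem_insert_of_mem hi))
      fun k' => by rw [hsum]; exact hs k'
    simp only [u', map_smul, hu i (mem_insert_of_mem hi), smul_comm (c i k')]

theorem lie_mem_gSpace {T : LieSubalgebra F L} {α β : L →ₗ[F] F} {x y : L}
    (hx : x ∈ gSpace F L T α) (hy : y ∈ gSpace F L T β) :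
    ⁅x, y⁆ ∈ gSpace F L T (α + β) := by
  intro t ht
  rw [leibniz_lie, hx t ht, hy t ht, smul_lie, lie_smul, LinearMap.add_apply, add_smul]

theorem apply_mem_gSpace {T : LieSubalgebra F L} (τ : L ≃ₗ[F] L)
    (hτ : ∀ a b : L, τ ⁅a, b⁆ = ⁅τ a, τ b⁆) (hτT : ∀ t ∈ T, τ.symm t ∈ T)
    {γ : L →ₗ[F] F} {x : L} (hx : x ∈ gSpace F L T γ) :
    τ x ∈ gSpace F L T (γ ∘ₗ τ.symm.toLinearMap) := by
  intro t ht
  rw [← τ.apply_symm_apply t, ← hτ, hx _ (hτT t ht), map_smul]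
  simp

theorem pow_apply_lie {σ : L ≃ₗ[F] L} (hσ : ∀ a b : L, σ ⁅a, b⁆ = ⁅σ a, σ b⁆) (n : ℕ) (a b : L) :
    (σ ^ n) ⁅a, b⁆ = ⁅(σ ^ n) a, (σ ^ n) b⁆ := by
  induction n with
  | zero => rfl
  | succ n ih => rw [pow_succ', LinearEquiv.mul_apply, ih, hσ]; rfl

theorem pow_apply_mem {T : LieSubalgebra F L} {σ : L ≃ₗ[F] L} (hσT : ∀ t ∈ T, σ t ∈ T)
    (n : ℕ) {t : L} (ht : t ∈ T) : (σ ^ n) t ∈ T := by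
  induction n with
  | zero => exact ht
  | succ n ih => rw [pow_succ', LinearEquiv.mul_apply]; exact hσT _ ih

theorem pow_symm_apply_mem {T : LieSubalgebra F L} {σ : L ≃ₗ[F] L} (hσT : ∀ t ∈ T, σ t ∈ T)
    (hσ : IsOfFinOrder σ) (n : ℕ) {t : L} (ht : t ∈ T) : (σ ^ n).symm t ∈ T := by
  obtain ⟨k, hk⟩ := hσ.mem_powers_iff_mem_zpowers.mpr
    (Subgroup.inv_mem _ (Subgroup.pow_mem _ (Subgroup.mem_zpowers σ) n))
  change (σ ^ n)⁻¹ t ∈ T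
  rw [← hk]
  exact pow_apply_mem hσT k ht

theorem piL_apply (σ : L ≃ₗ[F] L) (m : ℕ) (x : L) :
    piL σ m x = (m : F)⁻¹ • ∑ i ∈ range m, (σ ^ i) x := by
  simp [piL]

theorem apply_piL {σ : L ≃ₗ[F] L} {m : ℕ} (hσm : σ ^ m = 1) (x : L) :
    σ (piL σ m x) = piL σ m x := by
  have hshift : ∑ i ∈ range m, (σ ^ (i + 1)) x = ∑ i ∈ range m, (σ ^ i) x := by
    have := (sum_range_succ' (fun i => (σ ^ i) x) m).symm.trans (sum_range_succ _ m)
    rwa [hσm, pow_zero, add_left_inj] at this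
  simp only [piL_apply, map_smul, map_sum, ← LinearEquiv.mul_apply, ← pow_succ', hshift]

theorem lie_piL_of_apply_eq {σ : L ≃ₗ[F] L} (hσ : ∀ a b : L, σ ⁅a, b⁆ = ⁅σ a, σ b⁆)
    (m : ℕ) {t : L} (ht : σ t = t) (x : L) : ⁅t, piL σ m x⁆ = piL σ m ⁅t, x⁆ := by
  have hpow : ∀ i : ℕ, (σ ^ i) t = t := fun i => by
    rw [LinearEquiv.coe_pow]; exact Function.iterate_fixed ht i
  simp only [piL_apply, lie_smul, lie_sum, pow_apply_lie hσ, hpow]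

end

theorem stmt7_general {F L : Type*} [Field F] [LieRing L] [LieAlgebra F L]
    (T : LieSubalgebra F L)
    (m : ℕ) (hm : 0 < m)
    (σ : L ≃ₗ[F] L) (hσLie : ∀ x y : L, σ ⁅x, y⁆ = ⁅σ x, σ y⁆)
    (hσm : σ ^ m = 1)
    (hσT : ∀ t ∈ T, σ t ∈ T)
    (hA4 : A4Cond T σ)
    (α β : L →ₗ[F] F)
    (hne : ∃ t ∈ T, α t ≠ β t)
    (hπ : ∀ t ∈ T, σ t = t → α t = β t)
    (x y : L) (hx : x ∈ gSpace F L T α) (hy : y ∈ gSpace F L T (-β)) :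
    piL σ m ⁅x, y⁆ = 0 := by
  obtain ⟨t₀, ht₀, hαβ⟩ := hne
  have hσfin : IsOfFinOrder σ := isOfFinOrder_iff_pow_eq_one.mpr ⟨m, hm, hσm⟩
  set γ := α + -β
  have hz : ⁅x, y⁆ ∈ gSpace F L T γ := lie_mem_gSpace hx hy
  have hu (i : ℕ) : (σ ^ i) ⁅x, y⁆ ∈ gSpace F L T (γ ∘ₗ (σ ^ i).symm.toLinearMap) :=
    apply_mem_gSpace _ (pow_apply_lie hσLie i) (fun t ht => pow_symm_apply_mem hσT hσfin i ht) hz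
  have hT₀ : ∀ t ∈ T, σ t = t → ⁅t, piL σ m ⁅x, y⁆⁆ = 0 := fun t ht hσt => by
    rw [lie_piL_of_apply_eq hσLie m hσt, hz t ht, LinearMap.add_apply, LinearMap.neg_apply,
      hπ t ht hσt, add_neg_cancel, zero_smul, map_zero]
  have hT := hA4 _ (apply_piL hσm _) hT₀
  rw [piL_apply, smul_sum] at hT ⊢
  exact sum_eq_zero_of_weights_ne_zero (fun t : T => LieAlgebra.ad F L t)
    (fun i t => γ ((σ ^ i).symm t)) _ _ (fun i _ t => Submodule.smul_mem _ _ (hu i) t t.2)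
    (fun i _ => ⟨⟨_, pow_apply_mem hσT i ht₀⟩,
      by simpa [γ, ← sub_eq_add_neg, sub_eq_zero] using hαβ⟩)
    (fun t => hT t t.2)

/-- if `α ≠ β` are roots with `π(α) = π(β)` then for
`x ∈ g_α`, `y ∈ g_{-β}` we have `π([x,y]) = 0`. -/
theorem stmt7 {F L : Type*} [Field F] [CharZero F] [LieRing L] [LieAlgebra F L]
    (T : LieSubalgebra F L) (R : Set (L →ₗ[F] F))
    (B : LinearMap.BilinForm F L)
    (htoral : IsToralPair F L T R) (hIA1 : IsInvForm F L B T)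
    (hIA2 : IA2 F L T R)
    (m : ℕ) (hm : 0 < m) (ζ : F) (hζ : IsPrimitiveRoot ζ m)
    (σ : L ≃ₗ[F] L) (hσLie : ∀ x y : L, σ ⁅x, y⁆ = ⁅σ x, σ y⁆)
    (hσm : σ ^ m = 1)
    (hσT : ∀ t ∈ T, σ t ∈ T)
    (hσB : ∀ x y : L, B (σ x) (σ y) = B x y)
    (hA4 : A4Cond T σ)
    (α β : L →ₗ[F] F) (hα : α ∈ R) (hβ : β ∈ R)
    (hne : ∃ t ∈ T, α t ≠ β t)
    (hπ : ∀ t ∈ T, σ t = t → α t = β t)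
    (x y : L) (hx : x ∈ gSpace F L T α) (hy : y ∈ gSpace F L T (-β)) :
    piL σ m ⁅x, y⁆ = 0 :=
  stmt7_general T m hm σ hσLie hσm hσT hA4 α β hne hπ x y hx hy
end

section
/- Assume m is prime. Then condition (A4) (the centralizer of T^0 in g^0 is contained in g_0) for a finite-order automorphism σ of a toral pair (g,T) satisfying (IA1),(IA2) is equivalent to: π(α) ≠ 0 for every nonzero root α ∈ R. -/
open Finset

/-!
Backward direction: decompose `x` into root vectors and group the roots by their restriction to
`T`. Root spaces of roots that differ on `T` are independent, so if `x` centralizes `T⁰`, each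
group sum with a root nonvanishing on `T` is killed by some `t ∈ T⁰` on which that root is
nonzero, hence is itself zero; therefore `x` centralizes `T`.

Forward direction: let `α` be a root vanishing on `T⁰` but not on `T`. If `α ∘ σ = α` on `T`,
then `∑ σⁱ t₀ ∈ T⁰` has `α`-value `m α(t₀) ≠ 0`. Otherwise, since `m` is prime, the functionals
`α ∘ σ⁻ⁱ` (`0 ≤ i < m`) are pairwise distinct on `T`. For a root vector `e ∈ g_α`, the element
`x = ∑ σⁱ e` is `σ`-fixed and centralizes `T⁰`, so by (A4) `⁅t₀, x⁆ = 0`; as `σⁱ e ∈ g_{α ∘ σ⁻ⁱ}`,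
independence gives `α(t₀) e = ⁅t₀, e⁆ = 0`.
-/

open Set

section

variable {F L : Type*} [Field F] [LieRing L] [LieAlgebra F L] {T : LieSubalgebra F L}

theorem lie_mem_gSpace_s8 {α : L →ₗ[F] F} {e t : L} (he : e ∈ gSpace F L T α) (ht : t ∈ T) :
    ⁅t, e⁆ ∈ gSpace F L T α := by
  rw [he t ht]
  exact Submodule.smul_mem _ _ he

open scoped Classical in
theorem sum_filter_eqOn_eq_zero {ι : Type*} (β : ι → L →ₗ[F] F) (i₀ : ι) (s : Finset ι)
    (v : ι → L) (hv : ∀ i ∈ s, v i ∈ gSpace F L T (β i)) (hs : ∑ i ∈ s, v i = 0) :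
    ∑ j ∈ s with EqOn (β j) (β i₀) T, v j = 0 := by
  induction s using Finset.strongInduction generalizing v with
  | H s ih =>
    by_cases hall : ∀ j ∈ s, EqOn (β j) (β i₀) T
    · rwa [Finset.filter_true_of_mem hall]
    simp only [EqOn, not_forall] at hall
    obtain ⟨i₁, hi₁, t, ht, hne⟩ := hall
    -- `ad t - β i₁ t` kills `v i₁` and rescales every other `v j` by `β j t - β i₁ t`.
    set w : ι → L := fun j => (β j t - β i₁ t) • v j
    have hw : ∑ j ∈ s.erase i₁, w j = 0 := by
      rw [Finset.sum_erase _ (by simp [w])]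
      simp only [w, sub_smul, Finset.sum_sub_distrib, ← Finset.smul_sum, hs, smul_zero, sub_zero]
      rw [← Finset.sum_congr rfl fun j hj => hv j hj t ht, ← lie_sum, hs, lie_zero]
    have key := ih _ (Finset.erase_ssubset hi₁) w
      (fun j hj => Submodule.smul_mem _ _ (hv j (Finset.mem_of_mem_erase hj))) hw
    have hi₁_notMem : i₁ ∉ s.filter fun j => EqOn (β j) (β i₀) T :=
      fun h => hne ((Finset.mem_filter.mp h).2 ht)
    rw [Finset.filter_erase, Finset.erase_eq_of_notMem hi₁_notMem, Finset.sum_congr rfl fun j hj =>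
      show w j = (β i₀ t - β i₁ t) • v j by simp only [w, (Finset.mem_filter.mp hj).2 ht],
      ← Finset.smul_sum] at key
    exact (smul_eq_zero.mp key).resolve_left (sub_ne_zero.mpr (Ne.symm hne))

open scoped Classical in
theorem lie_sum_filter_eqOn {ι : Type*} {β : ι → L →ₗ[F] F} {v : ι → L} {s : Finset ι}
    (hv : ∀ i ∈ s, v i ∈ gSpace F L T (β i)) (i₀ : ι) {t : L} (ht : t ∈ T) :
    ∑ j ∈ s with EqOn (β j) (β i₀) T, ⁅t, v j⁆ =
      β i₀ t • ∑ j ∈ s with EqOn (β j) (β i₀) T, v j := by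
  rw [Finset.smul_sum]
  refine Finset.sum_congr rfl fun j hj => ?_
  obtain ⟨hjs, hj⟩ := Finset.mem_filter.mp hj
  rw [hv j hjs t ht, hj ht]

theorem lie_eq_zero_of_forall_mem_lie_eq_zero {R : Set (L →ₗ[F] F)}
    (hdecomp : ⨆ α ∈ R, gSpace F L T α = ⊤) {S : Set L}
    (hR : ∀ α ∈ R, (∃ t ∈ T, α t ≠ 0) → ∃ t ∈ T, t ∈ S ∧ α t ≠ 0) {x : L}
    (hx : ∀ t ∈ T, t ∈ S → ⁅t, x⁆ = 0) {t₀ : L} (ht₀ : t₀ ∈ T) : ⁅t₀, x⁆ = 0 := by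
  classical
  have hx_mem : x ∈ ⨆ α : R, gSpace F L T α := by
    rw [iSup_subtype'' R (gSpace F L T), hdecomp]
    exact Submodule.mem_top
  obtain ⟨s, hs⟩ := Submodule.mem_iSup_iff_exists_finset.mp hx_mem
  obtain ⟨v, rfl⟩ := (Submodule.mem_iSup_finset_iff_exists_sum _ _).mp hs
  have hv : ∀ i ∈ s, (v i : L) ∈ gSpace F L T i := fun i _ => (v i).2
  rw [lie_sum]
  refine Finset.sum_cancels_of_partition_cancels
    ⟨fun i j => EqOn (i : L →ₗ[F] F) j T, ⟨fun _ => eqOn_refl _ _, EqOn.symm, EqOn.trans⟩⟩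
    fun i _ => ?_
  dsimp only
  rw [lie_sum_filter_eqOn hv i ht₀]
  by_cases hi : ∃ t ∈ T, (i : L →ₗ[F] F) t ≠ 0
  · obtain ⟨t, ht, htS, hit⟩ := hR _ i.2 hi
    have h := sum_filter_eqOn_eq_zero Subtype.val i s (fun j => ⁅t, (v j : L)⁆)
      (fun j hj => lie_mem_gSpace_s8 (hv j hj) ht) ((lie_sum _ _ _).symm.trans (hx t ht htS))
    rw [lie_sum_filter_eqOn hv i ht] at h
    rw [(smul_eq_zero.mp h).resolve_left hit, smul_zero]
  · push Not at hi
    rw [hi t₀ ht₀, zero_smul]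

theorem exists_pow_pow_eq_self {G : Type*} [Monoid G] {σ : G} {m i : ℕ} (hm : m.Prime)
    (hσm : σ ^ m = 1) (hi : i ≠ 0) (him : i < m) : ∃ k : ℕ, (σ ^ i) ^ k = σ :=
  exists_pow_eq_self_of_coprime
    ((Nat.coprime_of_lt_prime hi him hm).symm.coprime_dvd_right (orderOf_dvd_of_pow_eq_one hσm))

theorem map_sum_range_pow {M : Type*} [AddCommGroup M] [Module F M] {σ : M ≃ₗ[F] M} {m : ℕ}
    (hσm : σ ^ m = 1) (y : M) :
    σ (∑ i ∈ Finset.range m, (σ ^ i) y) = ∑ i ∈ Finset.range m, (σ ^ i) y := by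
  have := Finset.sum_range_succ' (fun i => (σ ^ i) y) m
  rw [Finset.sum_range_succ, hσm, pow_zero, add_left_inj] at this
  rw [map_sum, this]
  exact Finset.sum_congr rfl fun i _ => by rw [pow_succ']; rfl

theorem eqOn_comp_pow {τ : L ≃ₗ[F] L} (hτ : ∀ t ∈ T, τ t ∈ T) {α : L →ₗ[F] F}
    (hα : EqOn (α ∘ τ) α T) (k : ℕ) : EqOn (α ∘ ⇑(τ ^ k)) α T := by
  induction k with
  | zero => intro t _; rfl
  | succ k ih => intro t ht; rw [pow_succ]; exact (ih (hτ t ht)).trans (hα ht)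

theorem eqOn_comp_of_eqOn_comp_inv {τ : L ≃ₗ[F] L} (hτ : ∀ t ∈ T, τ t ∈ T) {α : L →ₗ[F] F}
    (h : EqOn (α ∘ ⇑τ⁻¹) α T) : EqOn (α ∘ τ) α T := fun t ht => by
  simpa using (h (hτ t ht)).symm

variable (T) in
def lieAutStabilizer : Submonoid (L ≃ₗ[F] L) where
  carrier := {τ | (∀ x y : L, τ ⁅x, y⁆ = ⁅τ x, τ y⁆) ∧ ∀ t ∈ T, τ t ∈ T}
  mul_mem' {τ ρ} hτ hρ :=
    ⟨fun x y => by simp only [LinearEquiv.mul_apply, hρ.1, hτ.1], fun t ht => hτ.2 _ (hρ.2 t ht)⟩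
  one_mem' := ⟨fun _ _ => rfl, fun _ ht => ht⟩

theorem inv_mem_lieAutStabilizer {σ : L ≃ₗ[F] L} {m : ℕ} (hσ : σ ∈ lieAutStabilizer T)
    (hσm : σ ^ m = 1) (hm : m ≠ 0) : σ⁻¹ ∈ lieAutStabilizer T := by
  rw [← eq_inv_of_mul_eq_one_left (by rw [pow_sub_one_mul hm, hσm] : σ ^ (m - 1) * σ = 1)]
  exact pow_mem hσ _

theorem map_mem_gSpace {τ : L ≃ₗ[F] L} (hτ : τ ∈ lieAutStabilizer T)
    (hτ' : τ⁻¹ ∈ lieAutStabilizer T) {α : L →ₗ[F] F} {e : L} (he : e ∈ gSpace F L T α) :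
    τ e ∈ gSpace F L T (α ∘ₗ (τ⁻¹ : L ≃ₗ[F] L).toLinearMap) := by
  intro t ht
  have ht' : τ (τ⁻¹ t) = t := τ.apply_symm_apply t
  calc ⁅t, τ e⁆ = τ ⁅τ⁻¹ t, e⁆ := by rw [hτ.1, ht']
    _ = _ := by rw [he _ (hτ'.2 t ht), map_smul]; rfl

theorem exists_fixed_apply_ne_zero_of_eqOn {σ : L ≃ₗ[F] L} {m : ℕ} (hm : (m : F) ≠ 0)
    (hσm : σ ^ m = 1) (hσ : σ ∈ lieAutStabilizer T) {α : L →ₗ[F] F} (hα : EqOn (α ∘ σ) α T)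
    {t₀ : L} (ht₀ : t₀ ∈ T) (hαt₀ : α t₀ ≠ 0) : ∃ t ∈ T, σ t = t ∧ α t ≠ 0 := by
  refine ⟨∑ i ∈ Finset.range m, (σ ^ i) t₀, sum_mem fun i _ => (pow_mem hσ i).2 t₀ ht₀,
    map_sum_range_pow hσm t₀, ?_⟩
  rw [map_sum, Finset.sum_congr rfl fun i _ =>
    show α ((σ ^ i) t₀) = α t₀ from eqOn_comp_pow hσ.2 hα i ht₀, Finset.sum_const,
    Finset.card_range, nsmul_eq_mul]
  exact mul_ne_zero hm hαt₀

theorem lie_eq_zero_of_not_eqOn {σ : L ≃ₗ[F] L} {m : ℕ} (hA4 : A4Cond T σ) (hm : m.Prime)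
    (hσm : σ ^ m = 1) (hσ : σ ∈ lieAutStabilizer T) {α : L →ₗ[F] F} (hα : ¬EqOn (α ∘ σ) α T)
    (hfix : ∀ t ∈ T, σ t = t → α t = 0) {e : L} (he : e ∈ gSpace F L T α) {t₀ : L}
    (ht₀ : t₀ ∈ T) : ⁅t₀, e⁆ = 0 := by
  classical
  have hσ' := inv_mem_lieAutStabilizer hσ hσm hm.ne_zero
  set β : ℕ → L →ₗ[F] F := fun i => α ∘ₗ ((σ ^ i)⁻¹ : L ≃ₗ[F] L).toLinearMap
  have hmem (i : ℕ) : (σ ^ i) e ∈ gSpace F L T (β i) :=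
    map_mem_gSpace (pow_mem hσ i) (by rw [← inv_pow]; exact pow_mem hσ' i) he
  have hx : ∑ i ∈ Finset.range m, ⁅t₀, (σ ^ i) e⁆ = 0 := by
    refine (lie_sum _ _ _).symm.trans
      (hA4 _ (map_sum_range_pow hσm e) (fun t ht htσ => ?_) t₀ ht₀)
    refine (lie_sum _ _ _).trans (Finset.sum_eq_zero fun i _ => ?_)
    rw [← Function.iterate_fixed htσ i, ← LinearEquiv.pow_apply, ← (pow_mem hσ i).1,
      he t ht, hfix t ht htσ, zero_smul, map_zero]
  have key := sum_filter_eqOn_eq_zero β 0 (Finset.range m) (fun i => ⁅t₀, (σ ^ i) e⁆)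
    (fun i _ => lie_mem_gSpace_s8 (hmem i) ht₀) hx
  rw [Finset.sum_eq_single_of_mem 0 (Finset.mem_filter.mpr ⟨Finset.mem_range.mpr hm.pos,
    eqOn_refl _ _⟩) ?_] at key
  · simpa using key
  intro j hj hj0
  obtain ⟨hjm, hj⟩ := Finset.mem_filter.mp hj
  obtain ⟨k, hk⟩ := exists_pow_pow_eq_self hm hσm hj0 (Finset.mem_range.mp hjm)
  refine absurd ?_ hα
  rw [← hk]
  refine eqOn_comp_pow (pow_mem hσ j).2 (eqOn_comp_of_eqOn_comp_inv (pow_mem hσ j).2 ?_) k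
  simpa [β] using hj

theorem exists_fixed_apply_ne_zero_of_a4Cond [CharZero F] {σ : L ≃ₗ[F] L} {m : ℕ}
    (hA4 : A4Cond T σ) (hm : m.Prime) (hσm : σ ^ m = 1) (hσ : σ ∈ lieAutStabilizer T)
    {α : L →ₗ[F] F} (hα : gSpace F L T α ≠ ⊥) {t₀ : L} (ht₀ : t₀ ∈ T) (hαt₀ : α t₀ ≠ 0) :
    ∃ t ∈ T, σ t = t ∧ α t ≠ 0 := by
  by_cases hinv : EqOn (α ∘ σ) α T
  · exact exists_fixed_apply_ne_zero_of_eqOn (Nat.cast_ne_zero.mpr hm.ne_zero) hσm hσ hinv ht₀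
      hαt₀
  by_contra! hfix
  obtain ⟨e, he, he0⟩ := Submodule.exists_mem_ne_zero_of_ne_bot hα
  have h := lie_eq_zero_of_not_eqOn hA4 hm hσm hσ hinv hfix he ht₀
  rw [he t₀ ht₀] at h
  exact he0 ((smul_eq_zero.mp h).resolve_left hαt₀)

end

theorem stmt8_general {F L : Type*} [Field F] [CharZero F] [LieRing L] [LieAlgebra F L]
    (T : LieSubalgebra F L) (R : Set (L →ₗ[F] F))
    (htoral : IsToralPair F L T R)
    (m : ℕ) (hm : Nat.Prime m)
    (σ : L ≃ₗ[F] L) (hσLie : ∀ x y : L, σ ⁅x, y⁆ = ⁅σ x, σ y⁆)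
    (hσm : σ ^ m = 1)
    (hσT : ∀ t ∈ T, σ t ∈ T) :
    A4Cond T σ ↔
      ∀ α ∈ R, (∃ t ∈ T, α t ≠ 0) → ∃ t ∈ T, σ t = t ∧ α t ≠ 0 := by
  have hσ : σ ∈ lieAutStabilizer T := ⟨hσLie, hσT⟩
  refine ⟨fun hA4 α hαR ⟨t₀, ht₀, hαt₀⟩ => ?_, fun hR x _ hx t ht => ?_⟩
  · exact exists_fixed_apply_ne_zero_of_a4Cond hA4 hm hσm hσ (htoral.root_ne α hαR) ht₀ hαt₀
  · exact lie_eq_zero_of_forall_mem_lie_eq_zero htoral.decomp (S := {t | σ t = t}) hR hx ht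

/-- for `m` prime, (A4) is equivalent to: `π(α) ≠ 0` for every
nonzero root `α ∈ R`. -/
theorem stmt8 {F L : Type*} [Field F] [CharZero F] [LieRing L] [LieAlgebra F L]
    (T : LieSubalgebra F L) (R : Set (L →ₗ[F] F))
    (B : LinearMap.BilinForm F L)
    (htoral : IsToralPair F L T R) (hIA1 : IsInvForm F L B T)
    (hIA2 : IA2 F L T R)
    (m : ℕ) (hm : Nat.Prime m) (ζ : F) (hζ : IsPrimitiveRoot ζ m)
    (σ : L ≃ₗ[F] L) (hσLie : ∀ x y : L, σ ⁅x, y⁆ = ⁅σ x, σ y⁆)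
    (hσm : σ ^ m = 1)
    (hσT : ∀ t ∈ T, σ t ∈ T)
    (hσB : ∀ x y : L, B (σ x) (σ y) = B x y) :
    A4Cond T σ ↔
      ∀ α ∈ R, (∃ t ∈ T, α t ≠ 0) → ∃ t ∈ T, σ t = t ∧ α t ≠ 0 :=
  stmt8_general T R htoral m hm σ hσLie hσm hσT
end

section
/- Let g be a Lie algebra with an invariant nondegenerate symmetric ℤ_m-graded bilinear form, and A = ⊕_{λ ∈ Λ} A^λ a unital commutative associative algebra over F graded by a torsion-free abelian group Λ, with a Λ-graded invariant nondegenerate symmetric bilinear form ε. Let ρ : Λ → ℤ_m be a group homomorphism and let g̃ = ⊕_{λ ∈ Λ} g^{ρ(λ)} ⊗ A^λ be the loop algebra inside g ⊗ A with the form (x ⊗ a, y ⊗ b) = (x,y)ε(a,b). Then this form restricted to g̃ is a Λ-graded invariant nondegenerate symmetric bilinear form. -/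
/-!
Symmetry and invariance of `(x ⊗ a, y ⊗ b) = (x, y) ε(a, b)` hold on pure tensors, and gradedness
holds because `ε` already pairs `A^λ` with `A^μ` trivially when `λ + μ ≠ 0`. For nondegeneracy, a
graded form is nondegenerate on a sum of components as soon as each component `g^{ρ λ} ⊗ A^λ`
pairs nondegenerately with `g^{-ρ λ} ⊗ A^{-λ}`; this follows from the nondegeneracy of the
pairings `A^λ × A^{-λ}` and `g^h × g^{-h}` (consequences of the gradings of `ε` and `(,)`), by
expanding a tensor in a basis of the second factor.
-/

open TensorProduct

namespace TensorProduct

theorem apply_rid_lTensor_eq_apply_lid_rTensor {R V X : Type*} [CommRing R] [AddCommGroup V]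
    [Module R V] [AddCommGroup X] [Module R X] (φ : V →ₗ[R] R) (f : X →ₗ[R] R) (t : V ⊗[R] X) :
    φ (TensorProduct.rid R V (f.lTensor V t)) = f (TensorProduct.lid R X (φ.rTensor X t)) := by
  induction t with
  | zero => simp
  | tmul v x => simp [mul_comm]
  | add s t hs ht => simp [hs, ht]

theorem eq_zero_of_forall_rTensor_eq_zero {F V X ι : Type*} [Field F] [AddCommGroup V]
    [Module F V] [AddCommGroup X] [Module F X] (φ : ι → V →ₗ[F] F)
    (hφ : ∀ v, (∀ i, φ i v = 0) → v = 0) (t : V ⊗[F] X) (ht : ∀ i, (φ i).rTensor X t = 0) :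
    t = 0 := by
  classical
  let b := Module.Basis.ofVectorSpace F X
  -- every coefficient of `t` in the basis `b` is killed by all the `φ i`
  refine (equivFinsuppOfBasisRight b).map_eq_zero_iff.mp (Finsupp.ext fun j => hφ _ fun i => ?_)
  rw [equivFinsuppOfBasisRight_apply, apply_rid_lTensor_eq_apply_lid_rTensor, ht, map_zero,
    map_zero]

end TensorProduct

namespace LinearMap.BilinForm

section Subspaces

variable {R V X : Type*} [CommRing R] [AddCommGroup V] [Module R V] [AddCommGroup X] [Module R X]
  (P : LinearMap.BilinForm R V) (Q : LinearMap.BilinForm R X)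

theorem tmul_apply_eq_zero_of_mem_range_map {V' W' : Submodule R V} {X' Y' : Submodule R X}
    (hP : ∀ v ∈ V', ∀ w ∈ W', P v w = 0) {u v : V ⊗[R] X}
    (hu : u ∈ range (map V'.subtype X'.subtype)) (hv : v ∈ range (map W'.subtype Y'.subtype)) :
    P.tmul Q u v = 0 := by
  obtain ⟨s, rfl⟩ := hu
  obtain ⟨t, rfl⟩ := hv
  induction s with
  | zero => simp
  | add s₁ s₂ h₁ h₂ => simp [h₁, h₂]
  | tmul a x =>
    induction t with
    | zero => simp
    | add t₁ t₂ h₁ h₂ => rw [map_add, map_add, h₁, h₂, add_zero]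
    | tmul b y => simp [hP a a.2 b b.2]

theorem tmul_map_subtype_apply_tmul (V' : Submodule R V) (X' : Submodule R X)
    (t : V' ⊗[R] X') (w : V) (y : X) :
    P.tmul Q (map V'.subtype X'.subtype t) (w ⊗ₜ y) =
      Q (TensorProduct.lid R X' ((P.flip w ∘ₗ V'.subtype).rTensor X' t)) y := by
  induction t with
  | zero => simp
  | tmul v x => simp [mul_comm]
  | add s t hs ht => simp_all

end Subspaces

theorem eq_zero_of_mem_range_map_of_tmul_apply_tmul_eq_zero {F V X : Type*} [Field F]
    [AddCommGroup V] [Module F V] [AddCommGroup X] [Module F X]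
    (P : LinearMap.BilinForm F V) (Q : LinearMap.BilinForm F X)
    {V' W' : Submodule F V} {X' Y' : Submodule F X}
    (hP : ∀ v ∈ V', (∀ w ∈ W', P v w = 0) → v = 0)
    (hQ : ∀ x ∈ X', (∀ y ∈ Y', Q x y = 0) → x = 0)
    {u : V ⊗[F] X} (hu : u ∈ range (map V'.subtype X'.subtype))
    (h : ∀ w ∈ W', ∀ y ∈ Y', P.tmul Q u (w ⊗ₜ y) = 0) : u = 0 := by
  obtain ⟨t, rfl⟩ := hu
  have hslice : ∀ w : W', (P.flip w ∘ₗ V'.subtype).rTensor X' t = 0 := fun w => by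
    rw [← (TensorProduct.lid F X').map_eq_zero_iff, ← Submodule.coe_eq_zero]
    exact hQ _ (Subtype.prop _) fun y hy => by rw [← tmul_map_subtype_apply_tmul, h w w.2 y hy]
  have hsep : ∀ v : V', (∀ w : W', (P.flip w ∘ₗ V'.subtype) v = 0) → v = 0 :=
    fun v hv => Subtype.ext <| hP v v.2 fun w hw => hv ⟨w, hw⟩
  rw [eq_zero_of_forall_rTensor_eq_zero _ hsep t hslice, map_zero]

theorem tmul_apply_lie {F L A : Type*} [CommRing F] [LieRing L] [LieAlgebra F L] [CommRing A]
    [Algebra F A] {ε : LinearMap.BilinForm F A} {B : LinearMap.BilinForm F L}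
    (hε : ∀ a b c : A, ε (a * b) c = ε a (b * c)) (hB : ∀ x y z : L, B ⁅x, y⁆ z = B x ⁅y, z⁆)
    (u v w : A ⊗[F] L) : ε.tmul B ⁅u, v⁆ w = ε.tmul B u ⁅v, w⁆ := by
  induction u with
  | zero => simp
  | add u₁ u₂ h₁ h₂ => simp [add_lie, h₁, h₂]
  | tmul a x =>
    induction v with
    | zero => simp
    | add v₁ v₂ h₁ h₂ => simp [add_lie, lie_add, h₁, h₂]
    | tmul b y =>
      induction w with
      | zero => simp
      | add w₁ w₂ h₁ h₂ => rw [map_add, lie_add, map_add, h₁, h₂]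
      | tmul c z => simp [LieAlgebra.ExtendScalars.bracket_tmul, hε, hB]

end LinearMap.BilinForm

namespace Submodule

variable {F M ι : Type*} [Field F] [AddCommGroup M] [Module F M] [AddGroup ι]
  {gr : ι → Submodule F M} {P : LinearMap.BilinForm F M}

theorem eq_zero_of_forall_mem_neg_of_iSup_eq_top
    (hgr : ∀ h k, h + k ≠ 0 → ∀ x ∈ gr h, ∀ y ∈ gr k, P x y = 0)
    (htop : ⨆ i, gr i = ⊤) (hnd : ∀ x, (∀ y, P x y = 0) → x = 0)
    {lam : ι} {x : M} (hx : x ∈ gr lam) (h : ∀ y ∈ gr (-lam), P x y = 0) : x = 0 := by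
  refine hnd x fun y => ?_
  refine iSup_induction gr (motive := fun y => P x y = 0) (htop ▸ mem_top) (fun i z hz => ?_)
    (map_zero _) (fun a b ha hb => by rw [map_add, ha, hb, add_zero])
  by_cases hi : lam + i = 0
  · exact h z (neg_eq_of_add_eq_zero_right hi ▸ hz)
  · exact hgr lam i hi x hx z hz

theorem eq_zero_of_mem_iSup_of_forall_mem_neg
    (hgr : ∀ h k, h + k ≠ 0 → ∀ x ∈ gr h, ∀ y ∈ gr k, P x y = 0)
    (hnd : ∀ lam, ∀ x ∈ gr lam, (∀ y ∈ gr (-lam), P x y = 0) → x = 0)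
    {u : M} (hu : u ∈ ⨆ i, gr i) (h : ∀ v ∈ ⨆ i, gr i, P u v = 0) : u = 0 := by
  obtain ⟨f, hf, rfl⟩ := (mem_iSup_iff_exists_finsupp gr u).mp hu
  suffices f = 0 by simp [this]
  refine Finsupp.ext fun lam => hnd lam _ (hf lam) fun y hy => ?_
  have hsum := h y (mem_iSup_of_mem (-lam) hy)
  rwa [Finsupp.sum, map_sum, LinearMap.sum_apply, Finset.sum_eq_single lam
    (fun mu _ hmu => hgr mu (-lam) (fun h => hmu (add_neg_eq_zero.mp h)) _ (hf mu) y hy)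
    (fun h => by simp [Finsupp.notMem_support_iff.mp h])] at hsum

end Submodule

theorem stmt16_general {F L A Λ : Type*} [Field F]
    [LieRing L] [LieAlgebra F L] [CommRing A] [Algebra F A]
    [AddCommGroup Λ] [DecidableEq Λ]
    (m : ℕ)
    -- the `ℤ_m`-grading of `g` (induced by an order-`m` automorphism):
    (Lgr : ZMod m → Submodule F L)
    (hLdec : DirectSum.IsInternal Lgr)
    -- `B` is an invariant nondegenerate symmetric `ℤ_m`-graded form on `g`:
    (B : LinearMap.BilinForm F L)
    (hBsymm : ∀ x y : L, B x y = B y x)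
    (hBinv : ∀ x y z : L, B ⁅x, y⁆ z = B x ⁅y, z⁆)
    (hBnondeg : ∀ x : L, (∀ y : L, B x y = 0) → x = 0)
    (hBgr : ∀ h k : ZMod m, h + k ≠ 0 → ∀ x ∈ Lgr h, ∀ y ∈ Lgr k, B x y = 0)
    -- the `Λ`-grading of the unital commutative associative algebra `A`:
    (Agr : Λ → Submodule F A)
    (hAdec : DirectSum.IsInternal Agr)
    -- `ε` is a `Λ`-graded invariant nondegenerate symmetric form on `A`:
    (ε : LinearMap.BilinForm F A)
    (hεsymm : ∀ a b : A, ε a b = ε b a)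
    (hεinv : ∀ a b c : A, ε (a * b) c = ε a (b * c))
    (hεnondeg : ∀ a : A, (∀ b : A, ε a b = 0) → a = 0)
    (hεgr : ∀ lam mu : Λ, lam + mu ≠ 0 → ∀ a ∈ Agr lam, ∀ b ∈ Agr mu, ε a b = 0)
    (ρ : Λ →+ ZMod m)
    -- the loop algebra `gloop` and its homogeneous components:
    (comp : Λ → Submodule F (A ⊗[F] L))
    (hcomp : ∀ lam : Λ, comp lam =
      LinearMap.range (TensorProduct.map (Agr lam).subtype (Lgr (ρ lam)).subtype))
    (gloop : Submodule F (A ⊗[F] L)) (hgloop : gloop = ⨆ lam : Λ, comp lam)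
    -- the form `(a ⊗ x, b ⊗ y) = ε(a,b)·B(x,y)` on `g ⊗ A`:
    (Bt : LinearMap.BilinForm F (A ⊗[F] L))
    (hBt : Bt = LinearMap.BilinForm.tmul ε B) :
    -- symmetric:
    (∀ u v : A ⊗[F] L, Bt u v = Bt v u) ∧
    -- invariant on `gloop`:
    (∀ u ∈ gloop, ∀ v ∈ gloop, ∀ w ∈ gloop, Bt ⁅u, v⁆ w = Bt u ⁅v, w⁆) ∧
    -- `Λ`-graded:
    (∀ lam mu : Λ, lam + mu ≠ 0 →
      ∀ u ∈ comp lam, ∀ v ∈ comp mu, Bt u v = 0) ∧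
    -- nondegenerate on `gloop`:
    (∀ u ∈ gloop, (∀ v ∈ gloop, Bt u v = 0) → u = 0) := by
  subst hBt hgloop
  have hgraded : ∀ lam mu : Λ, lam + mu ≠ 0 →
      ∀ u ∈ comp lam, ∀ v ∈ comp mu, ε.tmul B u v = 0 := fun lam mu hne u hu v hv => by
    rw [hcomp] at hu hv
    exact ε.tmul_apply_eq_zero_of_mem_range_map B (hεgr lam mu hne) hu hv
  refine ⟨(LinearMap.IsSymm.tmul ⟨hεsymm⟩ ⟨hBsymm⟩).eq,
    fun u _ v _ w _ => LinearMap.BilinForm.tmul_apply_lie hεinv hBinv u v w, hgraded,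
    fun u hu h => Submodule.eq_zero_of_mem_iSup_of_forall_mem_neg hgraded ?_ hu h⟩
  intro lam u hu hperp
  rw [hcomp] at hu
  refine ε.eq_zero_of_mem_range_map_of_tmul_apply_tmul_eq_zero B
    (fun a ha => Submodule.eq_zero_of_forall_mem_neg_of_iSup_eq_top hεgr
      hAdec.submodule_iSup_eq_top hεnondeg ha)
    (fun x hx => Submodule.eq_zero_of_forall_mem_neg_of_iSup_eq_top hBgr
      hLdec.submodule_iSup_eq_top hBnondeg hx) hu fun a ha x hx => hperp _ ?_
  have hx' : x ∈ Lgr (ρ (-lam)) := by rwa [map_neg]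
  rw [hcomp]
  exact ⟨⟨a, ha⟩ ⊗ₜ ⟨x, hx'⟩, rfl⟩

/-- the bilinear form `(x ⊗ a, y ⊗ b) = (x,y)ε(a,b)` restricted
to the loop algebra `gloop = ⊕_λ g^{ρ(λ)} ⊗ A^λ ⊆ g ⊗ A` is a `Λ`-graded
invariant nondegenerate symmetric bilinear form.  (We realize `g ⊗ A` as
`A ⊗[F] L` with its base-change Lie bracket.) -/
theorem stmt16 {F L A Λ : Type*} [Field F] [CharZero F]
    [LieRing L] [LieAlgebra F L] [CommRing A] [Algebra F A]
    [AddCommGroup Λ] [DecidableEq Λ]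
    (htfΛ : ∀ (n : ℤ) (l : Λ), n • l = 0 → n = 0 ∨ l = 0)
    (m : ℕ) (hm : 0 < m)
    -- the `ℤ_m`-grading of `g` (induced by an order-`m` automorphism):
    (Lgr : ZMod m → Submodule F L)
    (hLdec : DirectSum.IsInternal Lgr)
    -- `B` is an invariant nondegenerate symmetric `ℤ_m`-graded form on `g`:
    (B : LinearMap.BilinForm F L)
    (hBsymm : ∀ x y : L, B x y = B y x)
    (hBinv : ∀ x y z : L, B ⁅x, y⁆ z = B x ⁅y, z⁆)
    (hBnondeg : ∀ x : L, (∀ y : L, B x y = 0) → x = 0)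
    (hBgr : ∀ h k : ZMod m, h + k ≠ 0 → ∀ x ∈ Lgr h, ∀ y ∈ Lgr k, B x y = 0)
    -- the `Λ`-grading of the unital commutative associative algebra `A`:
    (Agr : Λ → Submodule F A)
    (hAdec : DirectSum.IsInternal Agr)
    (hAmul : ∀ lam mu : Λ, ∀ a ∈ Agr lam, ∀ b ∈ Agr mu, a * b ∈ Agr (lam + mu))
    -- `ε` is a `Λ`-graded invariant nondegenerate symmetric form on `A`:
    (ε : LinearMap.BilinForm F A)
    (hεsymm : ∀ a b : A, ε a b = ε b a)
    (hεinv : ∀ a b c : A, ε (a * b) c = ε a (b * c))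
    (hεnondeg : ∀ a : A, (∀ b : A, ε a b = 0) → a = 0)
    (hεgr : ∀ lam mu : Λ, lam + mu ≠ 0 → ∀ a ∈ Agr lam, ∀ b ∈ Agr mu, ε a b = 0)
    (ρ : Λ →+ ZMod m)
    -- the loop algebra `gloop` and its homogeneous components:
    (comp : Λ → Submodule F (A ⊗[F] L))
    (hcomp : ∀ lam : Λ, comp lam =
      LinearMap.range (TensorProduct.map (Agr lam).subtype (Lgr (ρ lam)).subtype))
    (gloop : Submodule F (A ⊗[F] L)) (hgloop : gloop = ⨆ lam : Λ, comp lam)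
    -- the form `(a ⊗ x, b ⊗ y) = ε(a,b)·B(x,y)` on `g ⊗ A`:
    (Bt : LinearMap.BilinForm F (A ⊗[F] L))
    (hBt : Bt = LinearMap.BilinForm.tmul ε B) :
    -- symmetric:
    (∀ u v : A ⊗[F] L, Bt u v = Bt v u) ∧
    -- invariant on `gloop`:
    (∀ u ∈ gloop, ∀ v ∈ gloop, ∀ w ∈ gloop, Bt ⁅u, v⁆ w = Bt u ⁅v, w⁆) ∧
    -- `Λ`-graded:
    (∀ lam mu : Λ, lam + mu ≠ 0 →
      ∀ u ∈ comp lam, ∀ v ∈ comp mu, Bt u v = 0) ∧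
    -- nondegenerate on `gloop`:
    (∀ u ∈ gloop, (∀ v ∈ gloop, Bt u v = 0) → u = 0) :=
  stmt16_general m Lgr hLdec B hBsymm hBinv hBnondeg hBgr Agr hAdec ε hεsymm hεinv hεnondeg hεgr ρ
    comp hcomp gloop hgloop Bt hBt
end

section
/- Let (g,T) be an IARA such that T is a splitting Cartan subalgebra (T = g_0), σ an automorphism satisfying (A1)–(A4), Λ a torsion-free abelian group with epimorphism ρ : Λ → ℤ_m, and A a predivision Λ-graded unital commutative associative algebra with A^0 = F and supp_Λ A = Λ (with ε as before). Then in the affinization ĝ = L_ρ(g,A) ⊕ V ⊕ V†, the subalgebra T̂ = (T^0 ⊗ 1) ⊕ V ⊕ V† is a splitting Cartan subalgebra of ĝ, i.e. ĝ_0 = T̂. -/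
open Finset

open TensorProduct

/-- The `ζ^n`-eigenspace of a linear automorphism. -/
def eigSp {F L : Type*} [Field F] [AddCommGroup L] [Module F L]
    (σ : L ≃ₗ[F] L) (ζ : F) (n : ℕ) : Submodule F L where
  carrier := {x | σ x = ζ ^ n • x}
  add_mem' := by
    intro a b ha hb
    simp only [Set.mem_setOf_eq] at *
    rw [map_add, ha, hb, smul_add]
  zero_mem' := by simp
  smul_mem' := by
    intro c x hx
    simp only [Set.mem_setOf_eq] at *
    rw [map_smul, hx, smul_comm]

/-! An element `h` of `ĝ` centralising `T̂` is `Φ u + Ψ v + X d` with `u` in the loop algebra.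
Bracketing with `V† ⊆ T̂` kills `u`'s component of degree `λ` unless every coordinate of
`1 ⊗ λ ∈ V` vanishes; since `Λ` is torsion free and `F` has characteristic zero, this forces
`λ = 0`, so `u = 1 ⊗ x` with `x ∈ g⁰`, because `A⁰ = F`. Bracketing with `T⁰ ⊗ 1` then shows that
`x` centralises `T⁰`, and (A4) together with `g₀ = T` puts `x` in `T`. Conversely `T̂` is
abelian because `T` is. -/

theorem mem_gSpace_zero_iff {F L : Type*} [Field F] [LieRing L] [LieAlgebra F L]
    {T : LieSubalgebra F L} {x : L} :
    x ∈ gSpace F L T 0 ↔ ∀ t ∈ T, ⁅t, x⁆ = 0 :=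
  forall₂_congr fun t _ => by rw [LinearMap.zero_apply, zero_smul]

theorem mem_of_forall_fixed_lie_eq_zero {F L : Type*} [Field F] [LieRing L] [LieAlgebra F L]
    {T : LieSubalgebra F L} {σ : L ≃ₗ[F] L} (hsplit : gSpace F L T 0 = T.toSubmodule)
    (hA4 : A4Cond T σ) {x : L} (hx : σ x = x) (hTx : ∀ t ∈ T, σ t = t → ⁅t, x⁆ = 0) :
    x ∈ T := by
  rw [← LieSubalgebra.mem_toSubmodule, ← hsplit, mem_gSpace_zero_iff]
  exact hA4 x hx hTx

theorem one_tmul_injective_of_isTorsionFree (R Λ : Type*) [CommRing R] [CharZero R]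
    [AddCommGroup Λ] [Module.IsTorsionFree ℤ Λ] :
    Function.Injective fun μ : Λ => (1 : R) ⊗ₜ[ℤ] μ := by
  have h : (fun μ : Λ => (1 : R) ⊗ₜ[ℤ] μ) =
      LinearMap.rTensor Λ (Algebra.linearMap ℤ R) ∘ (TensorProduct.lid ℤ Λ).symm := by
    ext μ; simp
  rw [h]
  exact (Module.Flat.rTensor_preserves_injective_linearMap _ Int.cast_injective).comp
    (TensorProduct.lid ℤ Λ).symm.injective

section Affinization

variable {F L A Λ ι H : Type*} [Field F] [LieRing L] [LieAlgebra F L] [CommRing A]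
  [Algebra F A] [AddCommGroup Λ] [LieRing H] [LieAlgebra F H] {m : ℕ}
  (σ : L ≃ₗ[F] L) (ζ : F) (ρ : Λ →+ ZMod m) (Agr : Λ → Submodule F A)

def loopComponent (lam : Λ) : Submodule F (A ⊗[F] L) :=
  LinearMap.range (TensorProduct.map (Agr lam).subtype (eigSp σ ζ (ρ lam).val).subtype)

theorem iSupIndep_loopComponent [DecidableEq Λ] (hAdec : DirectSum.IsInternal Agr) :
    iSupIndep (loopComponent σ ζ ρ Agr) := by
  have := hAdec.chooseDecomposition
  refine (DirectSum.tensorDecomposition Agr L).isInternal.submodule_iSupIndep.mono fun lam => ?_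
  rw [loopComponent, DirectSum.decomposeTensor_apply, ← LinearMap.rTensor_comp_lTensor]
  exact LinearMap.range_comp_le_range _ _

variable {σ ζ ρ Agr}

theorem mem_eigSp_val_map_zero_iff {x : L} : x ∈ eigSp σ ζ (ρ 0).val ↔ σ x = x := by
  rw [map_zero, ZMod.val_zero]
  change σ x = ζ ^ 0 • x ↔ _
  rw [pow_zero, one_smul]

theorem one_tmul_mem_loopComponent_zero (hA1 : (1 : A) ∈ Agr 0) {x : L} (hx : σ x = x) :
    (1 : A) ⊗ₜ[F] x ∈ loopComponent σ ζ ρ Agr 0 :=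
  ⟨⟨1, hA1⟩ ⊗ₜ ⟨x, mem_eigSp_val_map_zero_iff.2 hx⟩, rfl⟩

theorem exists_eq_one_tmul_of_mem_loopComponent_zero
    (hA0 : Agr 0 = Submodule.span F {(1 : A)}) {w : A ⊗[F] L}
    (hw : w ∈ loopComponent σ ζ ρ Agr 0) : ∃ x : L, σ x = x ∧ w = (1 : A) ⊗ₜ[F] x := by
  obtain ⟨z, rfl⟩ := hw
  induction z using TensorProduct.induction_on with
  | zero => exact ⟨0, map_zero σ, by simp⟩
  | tmul a y =>
    obtain ⟨c, hc⟩ := Submodule.mem_span_singleton.mp (by rw [← hA0]; exact a.2)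
    refine ⟨c • y, by rw [map_smul, mem_eigSp_val_map_zero_iff.1 y.2], ?_⟩
    rw [map_tmul, Submodule.subtype_apply, ← hc, smul_tmul]
    rfl
  | add z₁ z₂ h₁ h₂ =>
    obtain ⟨x₁, hx₁, e₁⟩ := h₁
    obtain ⟨x₂, hx₂, e₂⟩ := h₂
    exact ⟨x₁ + x₂, by rw [map_add, hx₁, hx₂], by rw [map_add, e₁, e₂, tmul_add]⟩

variable {bV : Module.Basis ι F (F ⊗[ℤ] Λ)} {Φ : (A ⊗[F] L) →ₗ[F] H} {Ψ : (F ⊗[ℤ] Λ) →ₗ[F] H}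
  {X : (ι →₀ F) →ₗ[F] H} {ε : LinearMap.BilinForm F A} {B : LinearMap.BilinForm F L}

theorem lie_single_loopComponent
    (hbrD : ∀ (i : ι) (lam : Λ), ∀ a ∈ Agr lam, ∀ x ∈ eigSp σ ζ ((ρ lam).val),
      ⁅X (Finsupp.single i 1), Φ (a ⊗ₜ[F] x)⁆ = (bV.repr ((1 : F) ⊗ₜ[ℤ] lam) i) • Φ (a ⊗ₜ[F] x))
    (i : ι) {lam : Λ} {w : A ⊗[F] L} (hw : w ∈ loopComponent σ ζ ρ Agr lam) :
    ⁅X (Finsupp.single i 1), Φ w⁆ = (bV.repr ((1 : F) ⊗ₜ[ℤ] lam) i) • Φ w := by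
  obtain ⟨z, rfl⟩ := hw
  induction z using TensorProduct.induction_on with
  | zero => simp
  | tmul a x => simpa using hbrD i lam a a.2 x x.2
  | add z₁ z₂ h₁ h₂ => rw [map_add, map_add, lie_add, h₁, h₂, smul_add]

theorem lie_loopComponent_zero
    (hbrD : ∀ (i : ι) (lam : Λ), ∀ a ∈ Agr lam, ∀ x ∈ eigSp σ ζ ((ρ lam).val),
      ⁅X (Finsupp.single i 1), Φ (a ⊗ₜ[F] x)⁆ = (bV.repr ((1 : F) ⊗ₜ[ℤ] lam) i) • Φ (a ⊗ₜ[F] x))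
    (d : ι →₀ F) {w : A ⊗[F] L} (hw : w ∈ loopComponent σ ζ ρ Agr 0) :
    ⁅X d, Φ w⁆ = 0 := by
  induction d using Finsupp.induction_linear with
  | zero => rw [map_zero, zero_lie]
  | add d e hd he => rw [map_add, add_lie, hd, he, add_zero]
  | single i c =>
    rw [← Finsupp.smul_single_one, map_smul, smul_lie,
      lie_single_loopComponent hbrD i hw, tmul_zero, map_zero]
    simp

theorem mem_loopComponent_zero_of_lie_single_eq_zero [CharZero F] [DecidableEq Λ]
    [Module.IsTorsionFree ℤ Λ] (hAdec : DirectSum.IsInternal Agr)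
    (hΦ : ∀ u ∈ ⨆ lam, loopComponent σ ζ ρ Agr lam, Φ u = 0 → u = 0)
    (hbrD : ∀ (i : ι) (lam : Λ), ∀ a ∈ Agr lam, ∀ x ∈ eigSp σ ζ ((ρ lam).val),
      ⁅X (Finsupp.single i 1), Φ (a ⊗ₜ[F] x)⁆ = (bV.repr ((1 : F) ⊗ₜ[ℤ] lam) i) • Φ (a ⊗ₜ[F] x))
    {u : A ⊗[F] L} (hu : u ∈ ⨆ lam, loopComponent σ ζ ρ Agr lam)
    (hXu : ∀ i, ⁅X (Finsupp.single i 1), Φ u⁆ = 0) :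
    u ∈ loopComponent σ ζ ρ Agr 0 := by
  obtain ⟨f, hf, rfl⟩ := (Submodule.mem_iSup_iff_exists_finsupp _ u).mp hu
  have hf0 : ∀ μ ≠ 0, f μ = 0 := by
    intro μ hμ
    have hμV : (1 : F) ⊗ₜ[ℤ] μ ≠ 0 := fun h =>
      hμ (one_tmul_injective_of_isTorsionFree F Λ (h.trans (tmul_zero _ _).symm))
    obtain ⟨i, hi⟩ := Finsupp.ne_iff.mp (bV.repr.map_ne_zero_iff.mpr hμV)
    set c : Λ → F := fun lam => bV.repr ((1 : F) ⊗ₜ[ℤ] lam) i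
    have hsum : ∑ lam ∈ f.support, c lam • f lam = 0 := by
      refine hΦ _ (Submodule.sum_mem _ fun lam _ =>
        Submodule.smul_mem _ _ (Submodule.mem_iSup_of_mem lam (hf lam))) ?_
      calc Φ (∑ lam ∈ f.support, c lam • f lam)
          = ∑ lam ∈ f.support, ⁅X (Finsupp.single i 1), Φ (f lam)⁆ := by
            simp only [map_sum, map_smul, lie_single_loopComponent hbrD i (hf _), c]
        _ = ⁅X (Finsupp.single i 1), Φ (f.sum fun _ w => w)⁆ := by
            rw [Finsupp.sum, map_sum, lie_sum]
        _ = 0 := hXu i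
    by_cases hμf : μ ∈ f.support
    · have hcf := (iSupIndep_iff_finsetSum_eq_zero_imp_eq_zero _).mp
        (iSupIndep_loopComponent σ ζ ρ Agr hAdec) f.support (fun lam => c lam • f lam)
        (fun lam _ => Submodule.smul_mem _ _ (hf lam)) hsum μ hμf
      exact (smul_eq_zero.mp hcf).resolve_left hi
    · exact Finsupp.notMem_support_iff.mp hμf
  rw [Finsupp.sum_eq_single 0 (fun μ _ hμ => hf0 μ hμ) (fun _ => rfl)]
  exact hf 0

theorem lie_one_tmul_add_add (hA1 : (1 : A) ∈ Agr 0)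
    (hbrV : ∀ (v : F ⊗[ℤ] Λ) (h : H), ⁅Ψ v, h⁆ = 0)
    (hbrD : ∀ (i : ι) (lam : Λ), ∀ a ∈ Agr lam, ∀ x ∈ eigSp σ ζ ((ρ lam).val),
      ⁅X (Finsupp.single i 1), Φ (a ⊗ₜ[F] x)⁆ = (bV.repr ((1 : F) ⊗ₜ[ℤ] lam) i) • Φ (a ⊗ₜ[F] x))
    (hbrDD : ∀ d e : ι →₀ F, ⁅X d, X e⁆ = 0)
    (hbrG : ∀ (lam mu : Λ), ∀ a ∈ Agr lam, ∀ b ∈ Agr mu,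
      ∀ x ∈ eigSp σ ζ ((ρ lam).val), ∀ y ∈ eigSp σ ζ ((ρ mu).val),
      ⁅Φ (a ⊗ₜ[F] x), Φ (b ⊗ₜ[F] y)⁆ =
        Φ ((a * b) ⊗ₜ[F] ⁅x, y⁆) + (ε a b * B x y) • Ψ ((1 : F) ⊗ₜ[ℤ] lam))
    ⦃s t : L⦄ (hs : σ s = s) (ht : σ t = t) (w v : F ⊗[ℤ] Λ) (e d : ι →₀ F) :
    ⁅Φ ((1 : A) ⊗ₜ[F] s) + Ψ w + X e, Φ ((1 : A) ⊗ₜ[F] t) + Ψ v + X d⁆ =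
      Φ ((1 : A) ⊗ₜ[F] ⁅s, t⁆) := by
  have hst := hbrG 0 0 1 hA1 1 hA1 s (mem_eigSp_val_map_zero_iff.2 hs) t
    (mem_eigSp_val_map_zero_iff.2 ht)
  rw [tmul_zero, map_zero, smul_zero, add_zero, one_mul] at hst
  have hsX : ⁅Φ ((1 : A) ⊗ₜ[F] s), X d⁆ = 0 := by
    rw [← lie_skew, lie_loopComponent_zero hbrD d (one_tmul_mem_loopComponent_zero hA1 hs),
      neg_zero]
  have hXt := lie_loopComponent_zero hbrD e (one_tmul_mem_loopComponent_zero hA1 ht)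
  have hΨ : ∀ h : H, ⁅h, Ψ v⁆ = 0 := fun h => by rw [← lie_skew, hbrV, neg_zero]
  simp only [add_lie, lie_add, hbrV, hΨ, hst, hbrDD, hsX, hXt, add_zero]

end Affinization

theorem stmt19_general {F L A Λ ι H : Type*} [Field F] [CharZero F]
    [LieRing L] [LieAlgebra F L] [CommRing A] [Algebra F A]
    [AddCommGroup Λ] [DecidableEq Λ] [LieRing H] [LieAlgebra F H]
    -- `(g, T)` is an IARA with root system `R`, form `B`, and `T` a
    -- splitting Cartan subalgebra (`g₀ = T`):
    (T : LieSubalgebra F L)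
    (B : LinearMap.BilinForm F L)
    (hsplit : gSpace F L T (0 : L →ₗ[F] F) = T.toSubmodule)
    -- `σ` satisfies (A1)–(A4):
    (m : ℕ) (ζ : F)
    (σ : L ≃ₗ[F] L) (hσLie : ∀ x y : L, σ ⁅x, y⁆ = ⁅σ x, σ y⁆)
    (hA4 : A4Cond T σ)
    -- `Λ` torsion free, `ρ : Λ → ℤ_m` an epimorphism:
    (htfΛ : ∀ (n : ℤ) (l : Λ), n • l = 0 → n = 0 ∨ l = 0)
    (ρ : Λ →+ ZMod m)
    -- `A` predivision `Λ`-graded, unital commutative, `A⁰ = F`: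
    (Agr : Λ → Submodule F A)
    (hAdec : DirectSum.IsInternal Agr)
    (hA1 : (1 : A) ∈ Agr 0)
    (hA0 : Agr (0 : Λ) = Submodule.span F {(1 : A)})
    -- `ε` graded invariant nondegenerate symmetric, `ε(1,1) ≠ 0`:
    (ε : LinearMap.BilinForm F A)
    (hε11 : ε 1 1 ≠ 0)
    -- a basis of `V = F ⊗_ℤ Λ` consisting of elements of `Λ`:
    (bV : Module.Basis ι F (F ⊗[ℤ] Λ))
    -- structure maps of `ĝ = L_ρ(g,A) ⊕ V ⊕ V†`; the twisted loop algebra is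
    -- `g̃ = ⊕_λ (g^{ρ(λ)} ⊗ A^λ)`:
    (gloop : Submodule F (A ⊗[F] L))
    (hgloop : gloop = ⨆ lam : Λ, LinearMap.range
      (TensorProduct.map (Agr lam).subtype (eigSp σ ζ ((ρ lam).val)).subtype))
    (Φ : (A ⊗[F] L) →ₗ[F] H) (Ψ : (F ⊗[ℤ] Λ) →ₗ[F] H) (X : (ι →₀ F) →ₗ[F] H)
    (hspan : Submodule.map Φ gloop ⊔ LinearMap.range Ψ ⊔ LinearMap.range X = ⊤)
    (hinj : ∀ u ∈ gloop, ∀ (v : F ⊗[ℤ] Λ) (d : ι →₀ F),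
      Φ u + Ψ v + X d = 0 → u = 0 ∧ v = 0 ∧ d = 0)
    -- the affinization bracket (on homogeneous elements of the loop algebra):
    (hbrV : ∀ (v : F ⊗[ℤ] Λ) (h : H), ⁅Ψ v, h⁆ = 0)
    (hbrD : ∀ (i : ι) (lam : Λ), ∀ a ∈ Agr lam,
      ∀ x ∈ eigSp σ ζ ((ρ lam).val),
      ⁅X (Finsupp.single i 1), Φ (a ⊗ₜ[F] x)⁆ =
        (bV.repr ((1 : F) ⊗ₜ[ℤ] lam) i) • Φ (a ⊗ₜ[F] x))
    (hbrDD : ∀ d e : ι →₀ F, ⁅X d, X e⁆ = 0)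
    (hbrG : ∀ (lam mu : Λ), ∀ a ∈ Agr lam, ∀ b ∈ Agr mu,
      ∀ x ∈ eigSp σ ζ ((ρ lam).val), ∀ y ∈ eigSp σ ζ ((ρ mu).val),
      ⁅Φ (a ⊗ₜ[F] x), Φ (b ⊗ₜ[F] y)⁆ =
        Φ ((a * b) ⊗ₜ[F] ⁅x, y⁆) + (ε a b * B x y) • Ψ ((1 : F) ⊗ₜ[ℤ] lam))
    -- `T̂ = (T⁰ ⊗ 1) ⊕ V ⊕ V†`:
    (Th : LieSubalgebra F H)
    (hTh : ∀ h : H, h ∈ Th ↔ ∃ t ∈ T, σ t = t ∧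
      ∃ (v : F ⊗[ℤ] Λ) (d : ι →₀ F),
        h = Φ ((1 : A) ⊗ₜ[F] t) + Ψ v + X d) :
    -- conclusion: `T̂` is a splitting Cartan subalgebra of `ĝ`, i.e.
    -- `ĝ₀ = T̂`:
    gSpace F H Th (0 : H →ₗ[F] F) = Th.toSubmodule := by
  subst hgloop
  have : Module.IsTorsionFree ℤ Λ := .of_smul_eq_zero htfΛ
  have : Nontrivial A := nontrivial_of_ne 1 0 fun h => hε11 (by simp [h])
  have hΦ : ∀ u ∈ ⨆ lam, loopComponent σ ζ ρ Agr lam, Φ u = 0 → u = 0 :=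
    fun u hu h0 => (hinj u hu 0 0 (by simp [h0])).1
  have hlie := lie_one_tmul_add_add hA1 hbrV hbrD hbrDD hbrG
  ext h
  rw [mem_gSpace_zero_iff, LieSubalgebra.mem_toSubmodule]
  constructor
  · intro hcen
    obtain ⟨_, hy, _, ⟨d, rfl⟩, rfl⟩ :=
      Submodule.mem_sup.mp (hspan ▸ Submodule.mem_top : h ∈ _)
    obtain ⟨_, ⟨u, hu, rfl⟩, _, ⟨v, rfl⟩, rfl⟩ := Submodule.mem_sup.mp hy
    have hXu (i : ι) : ⁅X (Finsupp.single i 1), Φ u⁆ = 0 := by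
      simpa [hbrDD, ← lie_skew _ (Ψ v), hbrV] using
        hcen _ ((hTh _).2 ⟨0, T.zero_mem, map_zero σ, 0, Finsupp.single i 1, rfl⟩)
    obtain ⟨x, hx, rfl⟩ := exists_eq_one_tmul_of_mem_loopComponent_zero hA0
      (mem_loopComponent_zero_of_lie_single_eq_zero hAdec hΦ hbrD hu hXu)
    have hT0x : ∀ t ∈ T, σ t = t → ⁅t, x⁆ = 0 := by
      intro t ht hσt
      have h0 := hcen _ ((hTh _).2 ⟨t, ht, hσt, 0, 0, rfl⟩)
      rw [hlie hσt hx] at h0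
      refine (Module.FaithfullyFlat.one_tmul_eq_zero_iff F L _).mp (hΦ _ ?_ h0)
      exact Submodule.mem_iSup_of_mem 0
        (one_tmul_mem_loopComponent_zero hA1 (by rw [hσLie, hσt, hx]))
    exact (hTh _).2 ⟨x, mem_of_forall_fixed_lie_eq_zero hsplit hA4 hx hT0x, hx, v, d, rfl⟩
  · intro hh k hk
    obtain ⟨t, ht, hσt, v, d, rfl⟩ := (hTh _).1 hh
    obtain ⟨s, hs, hσs, w, e, rfl⟩ := (hTh _).1 hk
    have hst : ⁅s, t⁆ = 0 := mem_gSpace_zero_iff.mp (hsplit ▸ ht) s hs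
    rw [hlie hσs hσt, hst, tmul_zero, map_zero]

/-- in the affinization `ĝ = L_ρ(g,A) ⊕ V ⊕ V†` of an IARA
`(g,T)` whose `T` is a splitting Cartan subalgebra, with `σ` satisfying
(A1)–(A4) and `A⁰ = F`, the subalgebra `T̂ = (T⁰ ⊗ 1) ⊕ V ⊕ V†` is a
splitting Cartan subalgebra of `ĝ`, i.e. `ĝ₀ = T̂`. -/
theorem stmt19 {F L A Λ ι H : Type*} [Field F] [CharZero F]
    [LieRing L] [LieAlgebra F L] [CommRing A] [Algebra F A]
    [AddCommGroup Λ] [DecidableEq Λ] [LieRing H] [LieAlgebra F H]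
    -- `(g, T)` is an IARA with root system `R`, form `B`, and `T` a
    -- splitting Cartan subalgebra (`g₀ = T`):
    (T : LieSubalgebra F L) (R : Set (L →ₗ[F] F))
    (B : LinearMap.BilinForm F L) (hIARA : IsIARA F L B T R)
    (hsplit : gSpace F L T (0 : L →ₗ[F] F) = T.toSubmodule)
    -- `σ` satisfies (A1)–(A4):
    (m : ℕ) (hm : 0 < m) (ζ : F) (hζ : IsPrimitiveRoot ζ m)
    (σ : L ≃ₗ[F] L) (hσLie : ∀ x y : L, σ ⁅x, y⁆ = ⁅σ x, σ y⁆)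
    (hσm : σ ^ m = 1) (hσT : ∀ t ∈ T, σ t ∈ T)
    (hσB : ∀ x y : L, B (σ x) (σ y) = B x y)
    (hA4 : A4Cond T σ)
    -- `Λ` torsion free, `ρ : Λ → ℤ_m` an epimorphism:
    (htfΛ : ∀ (n : ℤ) (l : Λ), n • l = 0 → n = 0 ∨ l = 0)
    (ρ : Λ →+ ZMod m) (hρ : Function.Surjective ρ)
    -- `A` predivision `Λ`-graded, unital commutative, `A⁰ = F`:
    (Agr : Λ → Submodule F A)
    (hAdec : DirectSum.IsInternal Agr)
    (hAmul : ∀ lam mu : Λ, ∀ a ∈ Agr lam, ∀ b ∈ Agr mu, a * b ∈ Agr (lam + mu))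
    (hA1 : (1 : A) ∈ Agr 0)
    (hA0 : Agr (0 : Λ) = Submodule.span F {(1 : A)})
    (hApredivision : ∀ lam : Λ, Agr lam ≠ ⊥ ∧
      ∃ a ∈ Agr lam, ∃ b ∈ Agr (-lam), a * b = 1)
    -- `ε` graded invariant nondegenerate symmetric, `ε(1,1) ≠ 0`:
    (ε : LinearMap.BilinForm F A)
    (hεsymm : ∀ a b : A, ε a b = ε b a)
    (hεinv : ∀ a b c : A, ε (a * b) c = ε a (b * c))
    (hεnondeg : ∀ a : A, (∀ b : A, ε a b = 0) → a = 0)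
    (hεgr : ∀ lam mu : Λ, lam + mu ≠ 0 → ∀ a ∈ Agr lam, ∀ b ∈ Agr mu, ε a b = 0)
    (hε11 : ε 1 1 ≠ 0)
    -- a basis of `V = F ⊗_ℤ Λ` consisting of elements of `Λ`:
    (bV : Module.Basis ι F (F ⊗[ℤ] Λ)) (lamb : ι → Λ)
    (hbV : ∀ i : ι, bV i = (1 : F) ⊗ₜ[ℤ] lamb i)
    -- structure maps of `ĝ = L_ρ(g,A) ⊕ V ⊕ V†`; the twisted loop algebra is
    -- `g̃ = ⊕_λ (g^{ρ(λ)} ⊗ A^λ)`: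
    (gloop : Submodule F (A ⊗[F] L))
    (hgloop : gloop = ⨆ lam : Λ, LinearMap.range
      (TensorProduct.map (Agr lam).subtype (eigSp σ ζ ((ρ lam).val)).subtype))
    (Φ : (A ⊗[F] L) →ₗ[F] H) (Ψ : (F ⊗[ℤ] Λ) →ₗ[F] H) (X : (ι →₀ F) →ₗ[F] H)
    (hspan : Submodule.map Φ gloop ⊔ LinearMap.range Ψ ⊔ LinearMap.range X = ⊤)
    (hinj : ∀ u ∈ gloop, ∀ (v : F ⊗[ℤ] Λ) (d : ι →₀ F),
      Φ u + Ψ v + X d = 0 → u = 0 ∧ v = 0 ∧ d = 0)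
    -- the affinization bracket (on homogeneous elements of the loop algebra):
    (hbrV : ∀ (v : F ⊗[ℤ] Λ) (h : H), ⁅Ψ v, h⁆ = 0)
    (hbrD : ∀ (i : ι) (lam : Λ), ∀ a ∈ Agr lam,
      ∀ x ∈ eigSp σ ζ ((ρ lam).val),
      ⁅X (Finsupp.single i 1), Φ (a ⊗ₜ[F] x)⁆ =
        (bV.repr ((1 : F) ⊗ₜ[ℤ] lam) i) • Φ (a ⊗ₜ[F] x))
    (hbrDD : ∀ d e : ι →₀ F, ⁅X d, X e⁆ = 0)
    (hbrG : ∀ (lam mu : Λ), ∀ a ∈ Agr lam, ∀ b ∈ Agr mu,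
      ∀ x ∈ eigSp σ ζ ((ρ lam).val), ∀ y ∈ eigSp σ ζ ((ρ mu).val),
      ⁅Φ (a ⊗ₜ[F] x), Φ (b ⊗ₜ[F] y)⁆ =
        Φ ((a * b) ⊗ₜ[F] ⁅x, y⁆) + (ε a b * B x y) • Ψ ((1 : F) ⊗ₜ[ℤ] lam))
    -- the affinization form:
    (BH : LinearMap.BilinForm F H)
    (hBHsymm : ∀ h k : H, BH h k = BH k h)
    (hBHg : ∀ (a b : A) (x y : L),
      BH (Φ (a ⊗ₜ[F] x)) (Φ (b ⊗ₜ[F] y)) = ε a b * B x y)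
    (hBHVV : ∀ v w : F ⊗[ℤ] Λ, BH (Ψ v) (Ψ w) = 0)
    (hBHDD : ∀ d e : ι →₀ F, BH (X d) (X e) = 0)
    (hBHVg : ∀ (v : F ⊗[ℤ] Λ) (u : A ⊗[F] L), BH (Ψ v) (Φ u) = 0)
    (hBHDg : ∀ (d : ι →₀ F) (u : A ⊗[F] L), BH (X d) (Φ u) = 0)
    (hBHVD : ∀ (v : F ⊗[ℤ] Λ) (d : ι →₀ F),
      BH (Ψ v) (X d) = d.sum fun i c => c * bV.repr v i)
    -- `T̂ = (T⁰ ⊗ 1) ⊕ V ⊕ V†`: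
    (Th : LieSubalgebra F H)
    (hTh : ∀ h : H, h ∈ Th ↔ ∃ t ∈ T, σ t = t ∧
      ∃ (v : F ⊗[ℤ] Λ) (d : ι →₀ F),
        h = Φ ((1 : A) ⊗ₜ[F] t) + Ψ v + X d) :
    -- conclusion: `T̂` is a splitting Cartan subalgebra of `ĝ`, i.e.
    -- `ĝ₀ = T̂`:
    gSpace F H Th (0 : H →ₗ[F] F) = Th.toSubmodule :=
  stmt19_general T B hsplit m ζ σ hσLie hA4 htfΛ ρ Agr hAdec hA1 hA0 ε hε11 bV gloop hgloop Φ Ψ X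
    hspan hinj hbrV hbrD hbrDD hbrG Th hTh
end
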